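/- arXiv:2503.04091 — 3 statements merged into one kernel-verified Lean document; each statement's English description precedes it below -/
import Mathlib

section
/- Let W be a random variable and V a Bernoulli(1/2) random variable independent of nothing in particular (jointly distributed with W). Let g : 𝒲 × {0,1} → [-1,1] be measurable such that for an independent copy V' of V (independent of W) one has E_{V'}[g(w, V')] = 0 for every w. Then E[g(W, V)] ≤ inf_{t > 0} ( I(W; V) + t²/2 ) / t = √(2 I(W; V)). -/
open MeasureTheory Real

/-- KL divergence (assuming absolute continuity / finiteness, as the expected
log-likelihood ratio). -/
noncomputable def klDiv {α : Type*} [MeasurableSpace α] (Q P : Measure α) : ℝ :=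
  ∫ x, llr Q P x ∂Q

/-- Mutual information between two random variables: KL divergence between the
joint law and the product of the marginal laws. -/
noncomputable def mutualInfo {Ω α β : Type*} [MeasurableSpace Ω]
    [MeasurableSpace α] [MeasurableSpace β]
    (μ : Measure Ω) (X : Ω → α) (Y : Ω → β) : ℝ :=
  klDiv (μ.map fun ω => (X ω, Y ω)) ((μ.map X).prod (μ.map Y))

/-!
Donsker–Varadhan gives `E_Q f ≤ KL(Q ‖ P) + log E_P e^f`; take `Q` the joint law of `(W, V)`,
`P` the product of the marginals and `f = t g`. Since `g (w, ·)` has mean zero under the law of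
`V`, Hoeffding's lemma bounds `E_P e^{t g}` by `e^{t²/2}` fibrewise, so
`t E g ≤ I(W; V) + t²/2`, and `t = √(2 I)` optimises. Because `V` is uniform on two points, the
joint law is at most twice the product law; this makes the log-likelihood ratio integrable, so
`klDiv` is the true divergence and not the junk value `0` of a non-integrable Bochner integral.
-/

open ProbabilityTheory
open scoped ENNReal

section

variable {α : Type*} [MeasurableSpace α] {μ ν : Measure α}

lemma rnDeriv_le_of_le_smul [SigmaFinite ν] {c : ℝ≥0∞} (h : μ ≤ c • ν) :
    μ.rnDeriv ν ≤ᵐ[ν] fun _ ↦ c :=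
  ae_le_of_forall_setLIntegral_le_of_sigmaFinite (μ.measurable_rnDeriv ν) fun s _ _ ↦
    calc ∫⁻ x in s, μ.rnDeriv ν x ∂ν ≤ μ s := Measure.setLIntegral_rnDeriv_le s
      _ ≤ c * ν s := h s
      _ = ∫⁻ _ in s, c ∂ν := (setLIntegral_const s c).symm

lemma integrable_llr_of_le_smul [IsFiniteMeasure ν] {c : ℝ≥0∞} (hc : c ≠ ∞) (h : μ ≤ c • ν) :
    Integrable (llr μ ν) μ := by
  have : IsFiniteMeasure μ := ⟨(h _).trans_lt (ENNReal.mul_lt_top hc.lt_top (measure_lt_top _ _))⟩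
  rw [← integrable_rnDeriv_mul_log_iff (Measure.absolutelyContinuous_of_le_smul h)]
  obtain ⟨C, hC⟩ := isCompact_Icc.exists_bound_of_continuousOn
    (continuous_mul_log.continuousOn (s := Set.Icc 0 c.toReal))
  refine .of_bound (by fun_prop) C ?_
  filter_upwards [rnDeriv_le_of_le_smul h] with x hx
  exact hC _ ⟨ENNReal.toReal_nonneg, ENNReal.toReal_mono hc hx⟩

lemma integral_le_klDiv_add_log_integral_exp [IsProbabilityMeasure μ]
    [IsProbabilityMeasure ν] (hμν : μ ≪ ν) (h_int : Integrable (llr μ ν) μ) {f : α → ℝ}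
    (hfμ : Integrable f μ) (hfν : Integrable (fun x ↦ exp (f x)) ν) :
    ∫ x, f x ∂μ ≤ klDiv μ ν + log (∫ x, exp (f x) ∂ν) := by
  have := isProbabilityMeasure_tilted hfν
  have hgibbs := InformationTheory.integral_llr_add_sub_measure_univ_nonneg
    (hμν.trans (absolutelyContinuous_tilted hfν)) (integrable_llr_tilted_right hμν hfμ h_int hfν)
  rw [integral_llr_tilted_right hμν hfμ hfν h_int] at hgibbs
  simp only [probReal_univ] at hgibbs
  rw [klDiv]
  linarith

end

section

variable {α β : Type*} [MeasurableSpace α] [MeasurableSpace β]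

lemma integral_exp_mul_prod_le_of_integral_eq_zero (μ : Measure α) (ν : Measure β)
    [IsProbabilityMeasure μ] [IsProbabilityMeasure ν] {g : α × β → ℝ} (hg : Measurable g)
    {a b : ℝ} (hab : ∀ p, g p ∈ Set.Icc a b) (hmean : ∀ x, ∫ y, g (x, y) ∂ν = 0) (t : ℝ) :
    ∫ p, exp (t * g p) ∂(μ.prod ν) ≤ exp (((b - a) / 2) ^ 2 * t ^ 2 / 2) := by
  have hint : Integrable (fun p ↦ exp (t * g p)) (μ.prod ν) :=
    integrable_exp_mul_of_mem_Icc hg.aemeasurable (.of_forall hab)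
  have hparam : (((‖b - a‖₊ / 2) ^ 2 : NNReal) : ℝ) = ((b - a) / 2) ^ 2 := by
    push_cast
    rw [Real.norm_eq_abs, div_pow, sq_abs, div_pow]
  have hsection : ∀ x, ∫ y, exp (t * g (x, y)) ∂ν ≤ exp (((b - a) / 2) ^ 2 * t ^ 2 / 2) := by
    intro x
    rw [← hparam]
    exact (hasSubgaussianMGF_of_mem_Icc_of_integral_eq_zero
      (hg.comp measurable_prodMk_left).aemeasurable (.of_forall fun y ↦ hab (x, y))
      (hmean x)).mgf_le t
  rw [integral_prod _ hint]
  calc ∫ x, ∫ y, exp (t * g (x, y)) ∂ν ∂μ ≤ ∫ _, exp (((b - a) / 2) ^ 2 * t ^ 2 / 2) ∂μ :=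
        integral_mono hint.integral_prod_left (integrable_const _) hsection
    _ = _ := by simp

lemma mul_integral_le_klDiv_prod_add (μ : Measure α) (ν : Measure β) {Q : Measure (α × β)}
    [IsProbabilityMeasure μ] [IsProbabilityMeasure ν] [IsProbabilityMeasure Q]
    (hQ : Q ≪ μ.prod ν) (h_int : Integrable (llr Q (μ.prod ν)) Q) {g : α × β → ℝ}
    (hg : Measurable g) {a b : ℝ} (hab : ∀ p, g p ∈ Set.Icc a b)
    (hmean : ∀ x, ∫ y, g (x, y) ∂ν = 0) (t : ℝ) :
    t * ∫ p, g p ∂Q ≤ klDiv Q (μ.prod ν) + ((b - a) / 2) ^ 2 * t ^ 2 / 2 := by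
  have hexp : Integrable (fun p ↦ exp (t * g p)) (μ.prod ν) :=
    integrable_exp_mul_of_mem_Icc hg.aemeasurable (.of_forall hab)
  have hlog : log (∫ p, exp (t * g p) ∂(μ.prod ν)) ≤ ((b - a) / 2) ^ 2 * t ^ 2 / 2 :=
    (log_le_iff_le_exp (integral_exp_pos hexp)).2
      (integral_exp_mul_prod_le_of_integral_eq_zero μ ν hg hab hmean t)
  rw [← integral_const_mul]
  linarith [integral_le_klDiv_add_log_integral_exp hQ h_int
    ((Integrable.of_mem_Icc a b hg.aemeasurable (.of_forall hab)).const_mul t) hexp]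

end

lemma map_prodMk_le_smul_prod {Ω α β : Type*} [MeasurableSpace Ω] [MeasurableSpace α]
    [MeasurableSpace β] [Countable β] [MeasurableSingletonClass β] {μ : Measure Ω} [SFinite μ]
    {X : Ω → α} {Y : Ω → β} (hX : Measurable X) (hY : Measurable Y) {c : ℝ≥0∞}
    (hc : ∀ b, 1 ≤ c * μ (Y ⁻¹' {b})) :
    μ.map (fun ω ↦ (X ω, Y ω)) ≤ c • (μ.map X).prod (μ.map Y) := by
  refine Measure.le_iff.2 fun s hs ↦ ?_
  have hsection : ∀ b, MeasurableSet {x | (x, b) ∈ s} := fun b ↦ measurable_prodMk_right hs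
  calc μ.map (fun ω ↦ (X ω, Y ω)) s ≤ μ (⋃ b, X ⁻¹' {x | (x, b) ∈ s}) := by
        rw [Measure.map_apply (hX.prodMk hY) hs]
        exact measure_mono fun ω hω ↦ Set.mem_iUnion.2 ⟨Y ω, hω⟩
    _ ≤ ∑' b, μ.map X {x | (x, b) ∈ s} := by
        simp_rw [Measure.map_apply hX (hsection _)]
        exact measure_iUnion_le _
    _ ≤ ∑' b, c * (μ.map X {x | (x, b) ∈ s} * μ.map Y {b}) := by
        refine ENNReal.tsum_le_tsum fun b ↦ ?_
        rw [Measure.map_apply hY (measurableSet_singleton b), mul_left_comm]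
        exact le_mul_of_one_le_right' (hc b)
    _ = (c • (μ.map X).prod (μ.map Y)) s := by
        rw [Measure.smul_apply, Measure.prod_apply_symm hs, lintegral_countable',
          ENNReal.tsum_mul_left, smul_eq_mul]
        rfl

lemma le_sqrt_two_mul_of_forall_le_div {a I : ℝ} (h : ∀ t : ℝ, 0 < t → a ≤ (I + t ^ 2 / 2) / t) :
    a ≤ √(2 * I) := by
  rcases le_or_gt I 0 with hI | hI
  · rw [Real.sqrt_eq_zero'.2 (by linarith)]
    by_contra! ha
    have := h a ha
    rw [le_div_iff₀ ha] at this
    nlinarith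
  · set s := √(2 * I)
    have hs : 0 < s := Real.sqrt_pos.2 (by linarith)
    have hI : I = s ^ 2 / 2 := by rw [Real.sq_sqrt (by linarith)]; ring
    calc a ≤ (I + s ^ 2 / 2) / s := h s hs
      _ = s := by rw [hI]; field_simp; ring

theorem dv_hoeffding_mutualInfo_bound {Ω 𝒲 : Type*} [MeasureSpace Ω]
    [IsProbabilityMeasure (volume : Measure Ω)] [MeasurableSpace 𝒲]
    (W : Ω → 𝒲) (hW : Measurable W)
    (V : Ω → Bool) (hV : Measurable V)
    (hBern : volume (V ⁻¹' {true}) = 1 / 2)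
    (g : 𝒲 → Bool → ℝ) (hg : Measurable fun p : 𝒲 × Bool => g p.1 p.2)
    (hbdd : ∀ w v, g w v ∈ Set.Icc (-1 : ℝ) 1)
    (hzero : ∀ w, g w false + g w true = 0) :
    (∀ t : ℝ, 0 < t →
      ∫ ω, g (W ω) (V ω) ≤ (mutualInfo volume W V + t ^ 2 / 2) / t) ∧
    ∫ ω, g (W ω) (V ω) ≤ Real.sqrt (2 * mutualInfo volume W V) := by
  have hVhalf : ∀ b, volume (V ⁻¹' {b}) = 1 / 2 := by
    rintro (_ | _)
    · rw [show V ⁻¹' {false} = (V ⁻¹' {true})ᶜ by ext; simp,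
        prob_compl_eq_one_sub (hV (measurableSet_singleton true)), hBern, ENNReal.sub_half ENNReal.one_ne_top]
    · exact hBern
  have hmean : ∀ w, ∫ v, g w v ∂(volume.map V) = 0 := by
    intro w
    rw [integral_fintype (.of_finite), Fintype.sum_bool]
    simp [measureReal_def, Measure.map_apply hV, hVhalf, ← mul_add, add_comm, hzero]
  have hjoint := map_prodMk_le_smul_prod (μ := volume) hW hV (c := 2) fun b ↦ by
    rw [hVhalf, ENNReal.mul_div_cancel two_ne_zero ENNReal.ofNat_ne_top]
  have := Measure.isProbabilityMeasure_map (μ := volume) hW.aemeasurable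
  have := Measure.isProbabilityMeasure_map (μ := volume) hV.aemeasurable
  have := Measure.isProbabilityMeasure_map (μ := volume) (hW.prodMk hV).aemeasurable
  have hkey : ∀ t, t * ∫ ω, g (W ω) (V ω) ≤ mutualInfo volume W V + t ^ 2 / 2 := fun t ↦ by
    have := mul_integral_le_klDiv_prod_add _ _ (Measure.absolutelyContinuous_of_le_smul hjoint)
      (integrable_llr_of_le_smul ENNReal.ofNat_ne_top hjoint) hg (fun p ↦ hbdd p.1 p.2) hmean t
    rw [integral_map (hW.prodMk hV).aemeasurable hg.aestronglyMeasurable] at this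
    simpa [mutualInfo] using this
  have hbound : ∀ t : ℝ, 0 < t →
      ∫ ω, g (W ω) (V ω) ≤ (mutualInfo volume W V + t ^ 2 / 2) / t := fun t ht ↦ by
    rw [le_div_iff₀ ht, mul_comm]
    exact hkey t
  exact ⟨hbound, le_sqrt_two_mul_of_forall_le_div hbound⟩
end

section
/- Let ε ∈ {-1, +1} be a Rademacher random variable (uniform on {-1,+1}) and let L ∈ [0,1] be a random variable independent of ε. Fix constants C₁ > 1, C₃ > 0 satisfying e^{-2C₃C₁} + e^{2C₃} ≤ 2, and let ε̃ = ε - (C₁ - 1)/(C₁ + 1). Then E[exp(C₃(C₁+1) ε̃ L)] ≤ 1. -/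
/-!
By independence, the expectation is the average of `E[exp (2 C₃ L)]` and `E[exp (-2 C₃ C₁ L)]`.
The function `l ↦ exp (-2 C₃ C₁ l) + exp (2 C₃ l)` is convex, so on `[0, 1]` it is bounded by
its values at the endpoints, `2` and `exp (-2 C₃ C₁) + exp (2 C₃) ≤ 2`.
-/

open MeasureTheory ProbabilityTheory Real

theorem Real.exp_mul_le_one_sub_add_mul_exp (a : ℝ) {t : ℝ} (ht : t ∈ Set.Icc (0 : ℝ) 1) :
    exp (a * t) ≤ 1 - t + t * exp a := by
  simpa [mul_comm] using convexOn_exp.2 (Set.mem_univ 0) (Set.mem_univ a)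
    (sub_nonneg.2 ht.2) ht.1 (sub_add_cancel 1 t)

theorem Real.exp_mul_add_exp_mul_le_two {a b t : ℝ} (hab : exp a + exp b ≤ 2)
    (ht : t ∈ Set.Icc (0 : ℝ) 1) : exp (a * t) + exp (b * t) ≤ 2 := by
  nlinarith [exp_mul_le_one_sub_add_mul_exp a ht, exp_mul_le_one_sub_add_mul_exp b ht, ht.1]

theorem ProbabilityTheory.IndepFun.integral_comp_two_valued
    {Ω α β : Type*} {mΩ : MeasurableSpace Ω} {μ : Measure Ω} [IsProbabilityMeasure μ]
    [MeasurableSpace α] [MeasurableSingletonClass α] [MeasurableSpace β]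
    {ε : Ω → α} {X : Ω → β} {a b : α} (hε : Measurable ε) (hεab : ∀ ω, ε ω = a ∨ ε ω = b)
    (hX : AEMeasurable X μ) (hindep : IndepFun ε X μ) {F : α → β → ℝ}
    (hF : Integrable (fun ω => F (ε ω) (X ω)) μ)
    (hFa : AEStronglyMeasurable (F a) (μ.map X)) (hFb : AEStronglyMeasurable (F b) (μ.map X)) :
    ∫ ω, F (ε ω) (X ω) ∂μ
      = μ.real {ω | ε ω = a} * ∫ ω, F a (X ω) ∂μ
        + (1 - μ.real {ω | ε ω = a}) * ∫ ω, F b (X ω) ∂μ := by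
  have hA : MeasurableSet[MeasurableSpace.comap ε inferInstance] {ω | ε ω = a} :=
    ⟨{a}, measurableSet_singleton a, rfl⟩
  have hindep' : Indep (MeasurableSpace.comap ε inferInstance)
      (MeasurableSpace.comap X inferInstance) μ := hindep
  rw [← integral_add_compl (hε.comap_le _ hA) hF,
    setIntegral_congr_fun (g := fun ω => F a (X ω)) (hε.comap_le _ hA)
      (fun ω (hω : ε ω = a) => by simp only [hω]),
    setIntegral_congr_fun (g := fun ω => F b (X ω)) (hε.comap_le _ hA.compl)
      (fun ω (hω : ¬ ε ω = a) => by simp only [(hεab ω).resolve_left hω]),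
    hindep'.setIntegral_eq_mul hε.comap_le hX hA hFa,
    hindep'.setIntegral_eq_mul hε.comap_le hX hA.compl hFb,
    probReal_compl_eq_one_sub (hε.comap_le _ hA)]

theorem shifted_exponent_one {C₁ : ℝ} (hC₁ : C₁ + 1 ≠ 0) (C₃ l : ℝ) :
    C₃ * (C₁ + 1) * ((1 - (C₁ - 1) / (C₁ + 1)) * l) = 2 * C₃ * l := by
  field_simp; ring

theorem shifted_exponent_neg_one {C₁ : ℝ} (hC₁ : C₁ + 1 ≠ 0) (C₃ l : ℝ) :
    C₃ * (C₁ + 1) * ((-1 - (C₁ - 1) / (C₁ + 1)) * l) = -2 * C₃ * C₁ * l := by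
  field_simp; ring

theorem shifted_rademacher_mgf_le_one_general {Ω : Type*} [MeasureSpace Ω]
    [IsProbabilityMeasure (volume : Measure Ω)]
    (ε : Ω → ℝ) (hε : Measurable ε)
    (hεval : ∀ ω, ε ω = 1 ∨ ε ω = -1)
    (hεhalf : volume {ω | ε ω = 1} = 1 / 2)
    (L : Ω → ℝ) (hL : Measurable L)
    (hLbdd : ∀ ω, L ω ∈ Set.Icc (0 : ℝ) 1)
    (hindep : IndepFun ε L)
    (C₁ C₃ : ℝ) (hC₁ : 1 < C₁)
    (hcond : exp (-2 * C₃ * C₁) + exp (2 * C₃) ≤ 2) :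
    ∫ ω, exp (C₃ * (C₁ + 1) * ((ε ω - (C₁ - 1) / (C₁ + 1)) * L ω)) ≤ 1 := by
  set F : ℝ → ℝ → ℝ := fun e l => exp (C₃ * (C₁ + 1) * ((e - (C₁ - 1) / (C₁ + 1)) * l))
  have hC₁' : C₁ + 1 ≠ 0 := by linarith
  have hF_sum (ω : Ω) : F 1 (L ω) + F (-1) (L ω) ≤ 2 := by
    simp only [F, shifted_exponent_one hC₁', shifted_exponent_neg_one hC₁']
    rw [add_comm]
    exact exp_mul_add_exp_mul_le_two hcond (hLbdd ω)
  have hF_int {e : Ω → ℝ} (he : Measurable e) (hev : ∀ ω, e ω = 1 ∨ e ω = -1) :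
      Integrable fun ω => F (e ω) (L ω) := by
    refine .of_mem_Icc 0 2 (by simp only [F]; fun_prop) (ae_of_all _ fun ω => ?_)
    have hF_pos (c : ℝ) : 0 < F c (L ω) := exp_pos _
    have hF_le : F 1 (L ω) ≤ 2 ∧ F (-1) (L ω) ≤ 2 := by
      constructor <;> linarith [hF_sum ω, hF_pos 1, hF_pos (-1)]
    rcases hev ω with h | h <;> rw [h]
    exacts [⟨(hF_pos 1).le, hF_le.1⟩, ⟨(hF_pos (-1)).le, hF_le.2⟩]
  have hint_one := hF_int measurable_const fun _ => Or.inl rfl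
  have hint_neg_one := hF_int measurable_const fun _ => Or.inr rfl
  have hP_one : volume.real {ω | ε ω = 1} = 1 / 2 := by simp [measureReal_def, hεhalf]
  calc ∫ ω, F (ε ω) (L ω)
      = 1 / 2 * ∫ ω, (F 1 (L ω) + F (-1) (L ω)) := by
        rw [hindep.integral_comp_two_valued hε hεval hL.aemeasurable (hF_int hε hεval)
          (by simp only [F]; fun_prop) (by simp only [F]; fun_prop), hP_one,
          integral_add hint_one hint_neg_one]
        ring
    _ ≤ 1 / 2 * 2 := by
        gcongr
        simpa using integral_mono (hint_one.add hint_neg_one) (integrable_const 2) hF_sum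
    _ = 1 := by norm_num

theorem shifted_rademacher_mgf_le_one {Ω : Type*} [MeasureSpace Ω]
    [IsProbabilityMeasure (volume : Measure Ω)]
    (ε : Ω → ℝ) (hε : Measurable ε)
    (hεval : ∀ ω, ε ω = 1 ∨ ε ω = -1)
    (hεhalf : volume {ω | ε ω = 1} = 1 / 2)
    (L : Ω → ℝ) (hL : Measurable L)
    (hLbdd : ∀ ω, L ω ∈ Set.Icc (0 : ℝ) 1)
    (hindep : IndepFun ε L)
    (C₁ C₃ : ℝ) (hC₁ : 1 < C₁) (hC₃ : 0 < C₃)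
    (hcond : exp (-2 * C₃ * C₁) + exp (2 * C₃) ≤ 2) :
    ∫ ω, exp (C₃ * (C₁ + 1) * ((ε ω - (C₁ - 1) / (C₁ + 1)) * L ω)) ≤ 1 :=
  shifted_rademacher_mgf_le_one_general ε hε hεval hεhalf L hL hLbdd hindep C₁ C₃ hC₁ hcond
end

section
/- Let A be an ε-differentially private algorithm (in the strong sense that dP(w|s) ≤ e^ε dP(w|s') for all pairs of datasets s, s' in the support). Then I(W; S) ≤ (e^ε − 1)ε. -/
open MeasureTheory ProbabilityTheory

/-- An ε-differentially private mechanism: for any two input datasets in the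
support, the conditional output distributions are within a multiplicative
factor `e^ε` of each other. -/
def DiffPrivate {Ω 𝒮 𝒲 : Type*} [MeasurableSpace Ω] [MeasurableSpace 𝒮]
    [MeasurableSpace 𝒲] (μ : Measure Ω) (S : Ω → 𝒮) (W : Ω → 𝒲) (ε : ℝ) : Prop :=
  ∀ s s' : 𝒮, μ (S ⁻¹' {s}) ≠ 0 → μ (S ⁻¹' {s'}) ≠ 0 →
    ∀ B : Set 𝒲, MeasurableSet B →
      (μ[|S ⁻¹' {s}]) (W ⁻¹' B) ≤ ENNReal.ofReal (Real.exp ε) * (μ[|S ⁻¹' {s'}]) (W ⁻¹' B)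

/-! The likelihood ratio `r(w, s) = P(w, s) / (P(w) P(s)) = P(w | s) / P(w)` compares `P(w | s)`
with the average `P(w) = ∑ P(s') P(w | s')`, so differential privacy confines it to
`[e^{-ε}, e^ε]`. On that interval `r log r ≤ (r - 1) + (r - 1) log r ≤ (r - 1) + (e^ε - 1) ε`,
and integrating against `P_W ⊗ P_S` the terms `r - 1` cancel. -/

open Real

lemma sub_one_mul_log_le {r ε : ℝ} (hr : r ≤ exp ε) (hr' : 1 ≤ exp ε * r) :
    (r - 1) * log r ≤ (exp ε - 1) * ε := by
  have hr0 : 0 < r := pos_of_mul_pos_right (one_pos.trans_le hr') (exp_pos ε).le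
  have hlog_le : log r ≤ ε := by simpa using log_le_log hr0 hr
  have hlog_ge : -ε ≤ log r := by
    have := log_nonneg hr'
    rw [log_mul (exp_pos ε).ne' hr0.ne', log_exp] at this
    linarith
  have hlog_sub := log_le_sub_one_of_pos hr0
  have hexp := add_one_le_exp ε
  rcases le_total 1 r with h1 | h1
  · exact mul_le_mul (by linarith) hlog_le (log_nonneg h1) (by linarith)
  · rw [← neg_mul_neg, neg_sub]
    exact mul_le_mul (by linarith) (by linarith) (by linarith [log_nonpos hr0.le h1]) (by linarith)

lemma mul_log_div_le {p q ε : ℝ} (hq : 0 ≤ q) (hpq : p ≤ exp ε * q) (hqp : q ≤ exp ε * p) :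
    p * log (p / q) ≤ p - q + q * ((exp ε - 1) * ε) := by
  rcases hq.eq_or_lt with rfl | hq
  · have : p = 0 := le_antisymm (by simpa using hpq)
      (nonneg_of_mul_nonneg_right (by simpa using hqp) (exp_pos ε))
    simp [this]
  obtain ⟨r, rfl⟩ : ∃ r, p = q * r := ⟨p / q, (mul_div_cancel₀ p hq.ne').symm⟩
  have hr_le : r ≤ exp ε := le_of_mul_le_mul_left (by linarith) hq
  have hr_ge : 1 ≤ exp ε * r := le_of_mul_le_mul_left (by linarith) hq
  have hr0 : 0 < r := pos_of_mul_pos_right (one_pos.trans_le hr_ge) (exp_pos ε).le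
  calc q * r * log (q * r / q) = q * ((r - 1) * log r + log r) := by
        rw [mul_div_cancel_left₀ _ hq.ne']; ring
    _ ≤ q * ((exp ε - 1) * ε + (r - 1)) := mul_le_mul_of_nonneg_left
        (add_le_add (sub_one_mul_log_le hr_le hr_ge) (log_le_sub_one_of_pos hr0)) hq.le
    _ = q * r - q + q * ((exp ε - 1) * ε) := by ring

lemma sum_mul_log_div_le {ι : Type*} [Fintype ι] {p q : ι → ℝ} {ε : ℝ} (hq : ∀ i, 0 ≤ q i)
    (hpq : ∀ i, p i ≤ exp ε * q i) (hqp : ∀ i, q i ≤ exp ε * p i) (hsum : ∑ i, p i = ∑ i, q i) :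
    ∑ i, p i * log (p i / q i) ≤ (∑ i, q i) * ((exp ε - 1) * ε) :=
  calc ∑ i, p i * log (p i / q i)
      ≤ ∑ i, (p i - q i + q i * ((exp ε - 1) * ε)) :=
        Finset.sum_le_sum fun i _ ↦ mul_log_div_le (hq i) (hpq i) (hqp i)
    _ = (∑ i, q i) * ((exp ε - 1) * ε) := by
        rw [Finset.sum_add_distrib, Finset.sum_sub_distrib, hsum, sub_self, zero_add,
          Finset.sum_mul]

namespace MeasureTheory

variable {α : Type*} [MeasurableSpace α]

lemma Measure.real_le_mul_of_le_smul {μ ν : Measure α} [IsFiniteMeasure ν] {c : ℝ} (hc : 0 ≤ c)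
    (h : μ ≤ ENNReal.ofReal c • ν) (s : Set α) : μ.real s ≤ c * ν.real s := by
  have hs := Measure.le_iff'.1 h s
  rw [Measure.smul_apply, smul_eq_mul] at hs
  have := ENNReal.toReal_mono (ENNReal.mul_ne_top ENNReal.ofReal_ne_top (measure_ne_top ν s)) hs
  rwa [ENNReal.toReal_mul, ENNReal.toReal_ofReal hc] at this

variable [MeasurableSingletonClass α]

lemma Measure.le_of_forall_singleton_le [Finite α] {μ ν : Measure α}
    (h : ∀ x, μ {x} ≤ ν {x}) : μ ≤ ν := by
  classical
  have := Fintype.ofFinite α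
  refine Measure.le_iff'.2 fun s ↦ ?_
  rw [← s.coe_toFinset, ← sum_measure_singleton, ← sum_measure_singleton]
  exact Finset.sum_le_sum fun x _ ↦ h x

lemma Measure.rnDeriv_eq_measure_singleton_div {μ ν : Measure α} [IsFiniteMeasure μ]
    [IsFiniteMeasure ν] (hμν : μ ≪ ν) {x : α} (hx : ν {x} ≠ 0) :
    μ.rnDeriv ν x = μ {x} / ν {x} := by
  rw [ENNReal.eq_div_iff hx (measure_ne_top ν _), mul_comm, ← lintegral_singleton,
    Measure.setLIntegral_rnDeriv hμν]

end MeasureTheory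

section KLDivergence

variable {α : Type*} [MeasurableSpace α] [MeasurableSingletonClass α] [Fintype α]

lemma klDiv_eq_sum (μ ν : Measure α) [IsFiniteMeasure μ] [IsFiniteMeasure ν] (hμν : μ ≪ ν) :
    klDiv μ ν = ∑ x, μ.real {x} * log (μ.real {x} / ν.real {x}) := by
  rw [klDiv, integral_fintype .of_finite]
  refine Finset.sum_congr rfl fun x _ ↦ ?_
  rcases eq_or_ne (μ {x}) 0 with hμx | hμx
  · simp [measureReal_def, hμx]
  · rw [smul_eq_mul, llr, Measure.rnDeriv_eq_measure_singleton_div hμν (mt (@hμν _) hμx),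
      ENNReal.toReal_div, measureReal_def, measureReal_def]

theorem klDiv_le_of_le_smul (μ ν : Measure α) [IsProbabilityMeasure μ] [IsProbabilityMeasure ν]
    {ε : ℝ} (hμν : μ ≤ ENNReal.ofReal (exp ε) • ν) (hνμ : ν ≤ ENNReal.ofReal (exp ε) • μ) :
    klDiv μ ν ≤ (exp ε - 1) * ε := by
  rw [klDiv_eq_sum μ ν (Measure.absolutelyContinuous_of_le_smul hμν)]
  refine (sum_mul_log_div_le (fun _ ↦ measureReal_nonneg)
    (fun x ↦ Measure.real_le_mul_of_le_smul (exp_pos ε).le hμν {x})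
    (fun x ↦ Measure.real_le_mul_of_le_smul (exp_pos ε).le hνμ {x}) (by simp)).trans_eq ?_
  simp

end KLDivergence

namespace ProbabilityTheory

variable {Ω α β : Type*} [MeasurableSpace Ω] [MeasurableSpace α] [MeasurableSpace β]
  [MeasurableSingletonClass α] {μ : Measure Ω} {X : Ω → α}

lemma measure_eq_sum_mul_cond [Fintype α] [IsFiniteMeasure μ] (hX : Measurable X) (E : Set Ω) :
    μ E = ∑ a, μ (X ⁻¹' {a}) * μ[E | X ⁻¹' {a}] := by
  conv_lhs => rw [← sum_meas_smul_cond_fiber hX μ]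
  simp only [Measure.coe_finsetSum, Finset.sum_apply, Measure.smul_apply, smul_eq_mul]

lemma sum_measure_preimage_singleton_eq_one [Fintype α] [IsProbabilityMeasure μ]
    (hX : Measurable X) : ∑ a, μ (X ⁻¹' {a}) = 1 := by
  rw [sum_measure_preimage_singleton _ fun a _ ↦ hX (measurableSet_singleton a)]
  simp

variable [MeasurableSingletonClass β] {Y : Ω → β}

lemma map_prodMk_apply_singleton (hX : Measurable X) (hY : Measurable Y) (a : α) (b : β) :
    μ.map (fun ω ↦ (X ω, Y ω)) {(a, b)} = μ (Y ⁻¹' {b} ∩ X ⁻¹' {a}) := by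
  rw [Measure.map_apply (hX.prodMk hY) (measurableSet_singleton _), Set.inter_comm,
    ← Set.singleton_prod_singleton, Set.mk_preimage_prod]

lemma prod_map_apply_singleton [IsFiniteMeasure μ] (hX : Measurable X) (hY : Measurable Y)
    (a : α) (b : β) : (μ.map X).prod (μ.map Y) {(a, b)} = μ (X ⁻¹' {a}) * μ (Y ⁻¹' {b}) := by
  rw [← Set.singleton_prod_singleton, Measure.prod_prod,
    Measure.map_apply hX (measurableSet_singleton _),
    Measure.map_apply hY (measurableSet_singleton _)]

end ProbabilityTheory

namespace DiffPrivate

variable {Ω 𝒮 𝒲 : Type*} [MeasurableSpace Ω] [MeasurableSpace 𝒮] [MeasurableSpace 𝒲]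
  {μ : Measure Ω} [IsProbabilityMeasure μ] {S : Ω → 𝒮} {W : Ω → 𝒲} {ε : ℝ}
  [Fintype 𝒮] [MeasurableSingletonClass 𝒮]

lemma cond_le (hdp : DiffPrivate μ S W ε) (hS : Measurable S) {s : 𝒮} (hs : μ (S ⁻¹' {s}) ≠ 0)
    {B : Set 𝒲} (hB : MeasurableSet B) :
    μ[W ⁻¹' B | S ⁻¹' {s}] ≤ ENNReal.ofReal (exp ε) * μ (W ⁻¹' B) :=
  calc μ[W ⁻¹' B | S ⁻¹' {s}] = ∑ s', μ (S ⁻¹' {s'}) * μ[W ⁻¹' B | S ⁻¹' {s}] := by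
        rw [← Finset.sum_mul, sum_measure_preimage_singleton_eq_one hS, one_mul]
    _ ≤ ∑ s', μ (S ⁻¹' {s'}) * (ENNReal.ofReal (exp ε) * μ[W ⁻¹' B | S ⁻¹' {s'}]) := by
        refine Finset.sum_le_sum fun s' _ ↦ ?_
        rcases eq_or_ne (μ (S ⁻¹' {s'})) 0 with hs' | hs'
        · simp [hs']
        · exact mul_le_mul_right (hdp s s' hs hs' B hB) _
    _ = ENNReal.ofReal (exp ε) * μ (W ⁻¹' B) := by
        rw [measure_eq_sum_mul_cond hS, Finset.mul_sum]
        simp only [mul_left_comm]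

lemma le_cond (hdp : DiffPrivate μ S W ε) (hS : Measurable S) {s : 𝒮} (hs : μ (S ⁻¹' {s}) ≠ 0)
    {B : Set 𝒲} (hB : MeasurableSet B) :
    μ (W ⁻¹' B) ≤ ENNReal.ofReal (exp ε) * μ[W ⁻¹' B | S ⁻¹' {s}] :=
  calc μ (W ⁻¹' B) = ∑ s', μ (S ⁻¹' {s'}) * μ[W ⁻¹' B | S ⁻¹' {s'}] :=
        measure_eq_sum_mul_cond hS _
    _ ≤ ∑ s', μ (S ⁻¹' {s'}) * (ENNReal.ofReal (exp ε) * μ[W ⁻¹' B | S ⁻¹' {s}]) := by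
        refine Finset.sum_le_sum fun s' _ ↦ ?_
        rcases eq_or_ne (μ (S ⁻¹' {s'})) 0 with hs' | hs'
        · simp [hs']
        · exact mul_le_mul_right (hdp s' s hs' hs B hB) _
    _ = ENNReal.ofReal (exp ε) * μ[W ⁻¹' B | S ⁻¹' {s}] := by
        rw [← Finset.sum_mul, sum_measure_preimage_singleton_eq_one hS, one_mul]

lemma measure_inter_le (hdp : DiffPrivate μ S W ε) (hS : Measurable S) (s : 𝒮)
    {B : Set 𝒲} (hB : MeasurableSet B) :
    μ (S ⁻¹' {s} ∩ W ⁻¹' B) ≤ ENNReal.ofReal (exp ε) * (μ (W ⁻¹' B) * μ (S ⁻¹' {s})) := by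
  rcases eq_or_ne (μ (S ⁻¹' {s})) 0 with hs | hs
  · simp [measure_inter_null_of_null_left _ hs]
  · rw [← cond_mul_eq_inter (hS (measurableSet_singleton s)), ← mul_assoc]
    exact mul_le_mul_left (hdp.cond_le hS hs hB) _

lemma mul_le_measure_inter (hdp : DiffPrivate μ S W ε) (hS : Measurable S) (s : 𝒮)
    {B : Set 𝒲} (hB : MeasurableSet B) :
    μ (W ⁻¹' B) * μ (S ⁻¹' {s}) ≤ ENNReal.ofReal (exp ε) * μ (S ⁻¹' {s} ∩ W ⁻¹' B) := by
  rcases eq_or_ne (μ (S ⁻¹' {s})) 0 with hs | hs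
  · simp [hs]
  · rw [← cond_mul_eq_inter (hS (measurableSet_singleton s)), ← mul_assoc]
    exact mul_le_mul_left (hdp.le_cond hS hs hB) _

variable [Finite 𝒲] [MeasurableSingletonClass 𝒲]

lemma map_prodMk_le_smul_prod (hdp : DiffPrivate μ S W ε) (hW : Measurable W) (hS : Measurable S) :
    μ.map (fun ω ↦ (W ω, S ω)) ≤ ENNReal.ofReal (exp ε) • (μ.map W).prod (μ.map S) :=
  Measure.le_of_forall_singleton_le fun ⟨w, s⟩ ↦ by
    rw [Measure.smul_apply, smul_eq_mul, map_prodMk_apply_singleton hW hS,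
      prod_map_apply_singleton hW hS]
    exact hdp.measure_inter_le hS s (measurableSet_singleton w)

lemma prod_le_smul_map_prodMk (hdp : DiffPrivate μ S W ε) (hW : Measurable W) (hS : Measurable S) :
    (μ.map W).prod (μ.map S) ≤ ENNReal.ofReal (exp ε) • μ.map (fun ω ↦ (W ω, S ω)) :=
  Measure.le_of_forall_singleton_le fun ⟨w, s⟩ ↦ by
    rw [Measure.smul_apply, smul_eq_mul, map_prodMk_apply_singleton hW hS,
      prod_map_apply_singleton hW hS]
    exact hdp.mul_le_measure_inter hS s (measurableSet_singleton w)

end DiffPrivate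

theorem mutualInfo_le_of_dp'_general
    {Ω 𝒮 𝒲 : Type*} [MeasureSpace Ω]
    [IsProbabilityMeasure (volume : Measure Ω)]
    [Fintype 𝒮] [MeasurableSpace 𝒮] [MeasurableSingletonClass 𝒮]
    [Fintype 𝒲] [MeasurableSpace 𝒲] [MeasurableSingletonClass 𝒲]
    (S : Ω → 𝒮) (W : Ω → 𝒲) (hS : Measurable S) (hW : Measurable W)
    (ε : ℝ)
    (hdp : DiffPrivate volume S W ε) :
    mutualInfo volume W S ≤ (Real.exp ε - 1) * ε := by
  have := Measure.isProbabilityMeasure_map (μ := (volume : Measure Ω)) hW.aemeasurable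
  have := Measure.isProbabilityMeasure_map (μ := (volume : Measure Ω)) hS.aemeasurable
  have := Measure.isProbabilityMeasure_map (μ := (volume : Measure Ω)) (hW.prodMk hS).aemeasurable
  exact klDiv_le_of_le_smul _ _ (hdp.map_prodMk_le_smul_prod hW hS)
    (hdp.prod_le_smul_map_prodMk hW hS)

theorem mutualInfo_le_of_dp'
    {Ω 𝒮 𝒲 : Type*} [MeasureSpace Ω]
    [IsProbabilityMeasure (volume : Measure Ω)]
    [Fintype 𝒮] [MeasurableSpace 𝒮] [MeasurableSingletonClass 𝒮]
    [Fintype 𝒲] [MeasurableSpace 𝒲] [MeasurableSingletonClass 𝒲]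
    (S : Ω → 𝒮) (W : Ω → 𝒲) (hS : Measurable S) (hW : Measurable W)
    (ε : ℝ) (hε : 0 ≤ ε)
    (hdp : DiffPrivate volume S W ε) :
    mutualInfo volume W S ≤ (Real.exp ε - 1) * ε :=
  mutualInfo_le_of_dp'_general S W hS hW ε hdp
end
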